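/- If δ is a countable ordinal, k ∈ ω, and X = {γ < δ : g(γ) ≠ k} where g : δ → ω is continuous (order topology) and rank(X, δ) = rank(δ, δ) ≥ ξ₁ > 0, then for every η < δ with g''[η, δ) avoiding finitely many prescribed values, and every ξ₀ < ξ₁, there exists γ ∈ [η, δ) with g(γ) ≠ k and rank(γ, γ) ≥ ξ₀. -/

import Mathlib

noncomputable section

open Set

/-- The first uncountable ordinal. -/
def omega1 : Ordinal := (Cardinal.aleph 1).ord

/-- `δ` is a limit point of the set of ordinals `X`. -/
def IsLimitPointOf (X : Set Ordinal) (δ : Ordinal) : Prop :=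
  ∀ β < δ, ∃ ε ∈ X, β < ε ∧ ε < δ

/-- `rankGE X δ μ` says that the Cantor–Bendixson rank of `δ` with respect to `X`
is at least `μ`:  `rank(X, δ) ≥ 1` iff `δ` is a limit point of `X`, and for `μ > 1`,
`rank(X, δ) ≥ μ` iff for every `η < μ`, `δ` is a limit of ordinals `ε` with
`rank(X, ε) ≥ η`. -/
def rankGE (X : Set Ordinal) (δ μ : Ordinal) : Prop :=
  ∀ η : Ordinal, η < μ →
    ((η = 0 → IsLimitPointOf X δ) ∧
     (η ≠ 0 → ∀ β < δ, ∃ ε, β < ε ∧ ε < δ ∧ rankGE X ε η))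
termination_by μ
decreasing_by assumption

/-- A club (closed unbounded) subset of `ω₁`. -/
def IsClubW1 (C : Set Ordinal) : Prop :=
  C ⊆ Set.Iio omega1 ∧ (∀ α < omega1, ∃ β ∈ C, α < β) ∧
    (∀ δ, δ < omega1 → IsLimitPointOf C δ → δ ∈ C)

/-- A ladder system on `ω₁`: each countable limit ordinal `δ` gets a cofinal subset
`A δ ⊆ δ` of order type `ω`. -/
def IsLadder (A : Ordinal → Set Ordinal) : Prop :=
  ∀ δ, δ < omega1 → Order.IsSuccLimit δ →
    A δ ⊆ Set.Iio δ ∧ (∀ β < δ, ∃ γ ∈ A δ, β < γ) ∧ (A δ).Infinite ∧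
      ∀ x < δ, (A δ ∩ Set.Iio x).Finite

/-- A normal (strictly increasing and continuous) function on the ordinals below `ω₁`. -/
def IsNormalW1 (F : Ordinal → Ordinal) : Prop :=
  (∀ α, α < omega1 → F α < omega1) ∧
  (∀ α β, α < β → β < omega1 → F α < F β) ∧
  (∀ δ, δ < omega1 → Order.IsSuccLimit δ → F δ = sSup (F '' Set.Iio δ))

/-- An (additively) indecomposable nonzero ordinal. -/
def Indecomposable (δ : Ordinal) : Prop :=
  0 < δ ∧ ∀ β < δ, ∀ γ < δ, β + γ < δ

/-!
Because `g` is continuous into the discrete space `ℕ`, the set `X = {γ < δ : g γ ≠ k}` is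
relatively closed in `δ`, so every `ε < δ` in the closure of `X` lies in `X`. Since
`rank(X, δ) = rank(δ, δ) ≥ ξ₀ + 1`, there are `ε ∈ (η, δ)` with `rank(X, ε) ≥ ξ₀` that are points or limit
points of `X`; such an `ε` lies in `X`, and `rank(ε, ε) ≥ rank(X, ε)`.

The statement mixes three universes of ordinals (for `δ`, for `ξ₀, ξ₁`, and for the
quantifier in the rank hypothesis). Ranks are invariant under `Ordinal.lift`, and the rank of
`δ > 0` is at most `δ`, hence countable, so it is represented in every universe.
-/

universe u v w

section Rank

variable {X : Set Ordinal.{u}} {δ : Ordinal.{u}}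

theorem rankGE_zero (X : Set Ordinal.{u}) (δ : Ordinal.{u}) : rankGE X δ (0 : Ordinal.{v}) := by
  rw [rankGE]
  exact fun η hη => absurd hη not_lt_zero

theorem rankGE.mono_right {μ μ' : Ordinal.{v}} (h : rankGE X δ μ) (hle : μ' ≤ μ) :
    rankGE X δ μ' := by
  rw [rankGE] at h ⊢
  exact fun η hη => h η (hη.trans_le hle)

theorem rankGE.mono_left (μ : Ordinal.{v}) :
    ∀ {X Y : Set Ordinal.{u}} {δ : Ordinal.{u}},
      (∀ x ∈ X, x < δ → x ∈ Y) → rankGE X δ μ → rankGE Y δ μ := by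
  induction μ using WellFoundedLT.induction with
  | _ μ IH =>
    intro X Y δ hXY hX
    rw [rankGE] at hX ⊢
    intro η hη
    obtain ⟨hlim, hstep⟩ := hX η hη
    refine ⟨fun h0 β hβ => ?_, fun hη0 β hβ => ?_⟩
    · obtain ⟨x, hx, hβx, hxδ⟩ := hlim h0 β hβ
      exact ⟨x, hXY x hx hxδ, hβx, hxδ⟩
    · obtain ⟨ε, hβε, hεδ, hε⟩ := hstep hη0 β hβ
      exact ⟨ε, hβε, hεδ, IH η hη (fun x hx hxε => hXY x hx (hxε.trans hεδ)) hε⟩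

theorem isLimitPointOf_of_rankGE {ξ : Ordinal.{v}} (h : rankGE X δ ξ) (hξ : ξ ≠ 0) :
    IsLimitPointOf X δ := by
  rw [rankGE] at h
  exact (h 0 (pos_iff_ne_zero.mpr hξ)).1 rfl

theorem IsLimitPointOf.mem_closure (h : IsLimitPointOf X δ) (hδ : 0 < δ) : δ ∈ closure X := by
  obtain ⟨x, hx, -, hxδ⟩ := h 0 hδ
  have hlub : IsLUB (X ∩ Iio δ) δ :=
    ⟨fun y hy => hy.2.le, fun b hb => le_of_not_gt fun hbδ =>
      let ⟨y, hy, hby, hyδ⟩ := h b hbδ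
      (hb ⟨hy, hyδ⟩).not_gt hby⟩
  exact closure_mono inter_subset_left (hlub.mem_closure ⟨x, hx, hxδ⟩)

theorem exists_mem_closure_rankGE_of_rankGE_succ {ξ β : Ordinal} (h : rankGE X δ (Order.succ ξ))
    (hβ : β < δ) : ∃ ε, β < ε ∧ ε < δ ∧ ε ∈ closure X ∧ rankGE X ε ξ := by
  rw [rankGE] at h
  obtain ⟨hlim, hstep⟩ := h ξ (Order.lt_succ ξ)
  rcases eq_or_ne ξ 0 with rfl | hξ
  · obtain ⟨ε, hε, hβε, hεδ⟩ := hlim rfl β hβ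
    exact ⟨ε, hβε, hεδ, subset_closure hε, rankGE_zero X ε⟩
  · obtain ⟨ε, hβε, hεδ, hε⟩ := hstep hξ β hβ
    exact ⟨ε, hβε, hεδ,
      (isLimitPointOf_of_rankGE hε hξ).mem_closure (pos_of_gt hβε), hε⟩

theorem rankGE_lift (μ : Ordinal.{v}) :
    ∀ {X : Set Ordinal.{u}} {δ : Ordinal.{u}},
      rankGE X δ (Ordinal.lift.{w} μ) ↔ rankGE X δ μ := by
  induction μ using WellFoundedLT.induction with
  | _ μ IH =>
    intro X δ
    rw [rankGE, rankGE]
    constructor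
    · intro h η hη
      obtain ⟨hlim, hstep⟩ := h _ (Ordinal.lift_lt.mpr hη)
      refine ⟨fun h0 => hlim (by simp [h0]), fun hη0 β hβ => ?_⟩
      have hlift0 : Ordinal.lift.{w} η ≠ 0 := by rwa [← Ordinal.lift_zero.{v, w}, Ne, Ordinal.lift_inj]
      obtain ⟨ε, hβε, hεδ, hε⟩ := hstep hlift0 β hβ
      exact ⟨ε, hβε, hεδ, (IH η hη).mp hε⟩
    · intro h η' hη'
      obtain ⟨η, hη, rfl⟩ := Ordinal.lt_lift_iff.mp hη'
      obtain ⟨hlim, hstep⟩ := h η hη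
      have hlift0 : Ordinal.lift.{w} η = 0 ↔ η = 0 := by rw [← Ordinal.lift_zero.{v, w}, Ordinal.lift_inj]
      refine ⟨fun h0 => hlim (hlift0.mp h0), fun hη0 β hβ => ?_⟩
      obtain ⟨ε, hβε, hεδ, hε⟩ := hstep (mt hlift0.mpr hη0) β hβ
      exact ⟨ε, hβε, hεδ, (IH η hη).mpr hε⟩

theorem rankGE_congr_of_lift_eq {μ : Ordinal.{v}} {ν : Ordinal.{w}}
    (h : Ordinal.lift.{w} μ = Ordinal.lift.{v} ν) : rankGE X δ μ ↔ rankGE X δ ν := by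
  rw [← rankGE_lift.{u, v, w} μ, h, rankGE_lift]

theorem lift_le_of_rankGE (ξ : Ordinal.{v}) :
    ∀ {δ : Ordinal.{u}}, 0 < δ → rankGE X δ ξ → Ordinal.lift.{u} ξ ≤ Ordinal.lift.{v} δ := by
  induction ξ using WellFoundedLT.induction with
  | _ ξ IH =>
    intro δ hδ h
    rw [rankGE] at h
    refine le_of_forall_lt fun η' hη' => ?_
    obtain ⟨η, hη, rfl⟩ := Ordinal.lt_lift_iff.mp hη'
    rcases eq_or_ne η 0 with rfl | hη0
    · simpa using Ordinal.lift_lt.{v}.mpr hδ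
    · obtain ⟨ε, hε0, hεδ, hε⟩ := (h η hη).2 hη0 0 hδ
      exact (IH η hη hε0 hε).trans_lt (Ordinal.lift_lt.mpr hεδ)

end Rank

theorem lift_omega1 : Ordinal.lift.{v} omega1.{u} = omega1.{max u v} := by
  rw [omega1, omega1, Cardinal.lift_ord, Cardinal.lift_aleph, Ordinal.lift_one]

theorem lt_omega1_of_rankGE {X : Set Ordinal.{u}} {δ : Ordinal.{u}} {ξ : Ordinal.{v}}
    (hδ0 : 0 < δ) (hδ : δ < omega1) (h : rankGE X δ ξ) : ξ < omega1 := by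
  rw [← Ordinal.lift_lt.{u}, lift_omega1, ← lift_omega1.{u, v}]
  exact (lift_le_of_rankGE ξ hδ0 h).trans_lt (Ordinal.lift_lt.mpr hδ)

theorem exists_lift_eq_of_lt_omega1 {ξ : Ordinal.{v}} (hξ : ξ < omega1) :
    ∃ ν : Ordinal.{w}, Ordinal.lift.{v} ν = Ordinal.lift.{w} ξ := by
  rw [← lift_omega1.{0, v}] at hξ
  obtain ⟨ξ', rfl⟩ := Ordinal.mem_range_lift_of_le hξ.le
  exact ⟨Ordinal.lift.{w} ξ', by simp only [Ordinal.lift_lift]⟩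

theorem rankGE_iff_of_forall_rankGE_iff {X Y : Set Ordinal.{u}} {δ : Ordinal.{u}}
    (hδ0 : 0 < δ) (hδ : δ < omega1)
    (hXY : ∀ μ : Ordinal.{w}, rankGE X δ μ ↔ rankGE Y δ μ) (ξ : Ordinal.{v}) :
    rankGE X δ ξ ↔ rankGE Y δ ξ := by
  by_cases hξ : ξ < omega1
  · obtain ⟨ν, hν⟩ := exists_lift_eq_of_lt_omega1.{v, w} hξ
    rw [rankGE_congr_of_lift_eq hν.symm, rankGE_congr_of_lift_eq hν.symm]
    exact hXY ν
  · exact iff_of_false (fun h => hξ (lt_omega1_of_rankGE hδ0 hδ h))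
      (fun h => hξ (lt_omega1_of_rankGE hδ0 hδ h))

theorem ne_of_mem_closure_setOf_ne {α β : Type*} [TopologicalSpace α] [TopologicalSpace β]
    [DiscreteTopology β] {s : Set α} {f : s → β} (hf : Continuous f) {b : β} {x : α}
    (hx : x ∈ s) (hcl : x ∈ closure {y | ∃ h : y ∈ s, f ⟨y, h⟩ ≠ b}) : f ⟨x, hx⟩ ≠ b := by
  intro hfx
  obtain ⟨V, hV, hVf⟩ := isOpen_induced_iff.mp (hf.isOpen_preimage {b} (isOpen_discrete _))
  have hxV : (⟨x, hx⟩ : s) ∈ Subtype.val ⁻¹' V := hVf ▸ hfx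
  obtain ⟨y, hyV, hy, hfy⟩ := mem_closure_iff.mp hcl V hV hxV
  have hfy' : (⟨y, hy⟩ : s) ∈ f ⁻¹' {b} := hVf ▸ hyV
  exact hfy hfy'

theorem stmt10_general (δ : Ordinal) (hδ : δ < omega1) (g : Set.Iio δ → ℕ) (hg : Continuous g)
    (k : ℕ) (X : Set Ordinal) (hX : X = {γ | ∃ h : γ < δ, g ⟨γ, h⟩ ≠ k})
    (ξ₁ : Ordinal)
    (hrk : ∀ μ, rankGE X δ μ ↔ rankGE (Set.Iio δ) δ μ)
    (hge : rankGE (Set.Iio δ) δ ξ₁)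
    (η : Ordinal) (hη : η < δ)
    (ξ₀ : Ordinal) (hξ₀ : ξ₀ < ξ₁) :
    ∃ γ, ∃ h : γ < δ, η ≤ γ ∧ g ⟨γ, h⟩ ≠ k ∧ rankGE (Set.Iio γ) γ ξ₀ := by
  have hδ0 : 0 < δ := pos_of_gt hη
  have hXsucc : rankGE X δ (Order.succ ξ₀) :=
    (rankGE_iff_of_forall_rankGE_iff hδ0 hδ hrk _).mpr (hge.mono_right (Order.succ_le_of_lt hξ₀))
  obtain ⟨ε, hηε, hεδ, hεX, hε⟩ := exists_mem_closure_rankGE_of_rankGE_succ hXsucc hη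
  subst hX
  exact ⟨ε, hεδ, hηε.le, ne_of_mem_closure_setOf_ne hg hεδ hεX,
    hε.mono_left _ fun x _ hxε => hxε⟩

/-- if `X = {γ < δ : g γ ≠ k}` has the same rank at `δ` as `δ` itself,
`rank(δ, δ) ≥ ξ₁ > 0`, and `g` avoids the finitely many values in `S` on `[η, δ)`,
then for every `ξ₀ < ξ₁` there is `γ ∈ [η, δ)` with `g γ ≠ k` and `rank(γ, γ) ≥ ξ₀`. -/
theorem stmt10 (δ : Ordinal) (hδ : δ < omega1) (g : Set.Iio δ → ℕ) (hg : Continuous g)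
    (k : ℕ) (X : Set Ordinal) (hX : X = {γ | ∃ h : γ < δ, g ⟨γ, h⟩ ≠ k})
    (ξ₁ : Ordinal) (hξ₁ : 0 < ξ₁)
    (hrk : ∀ μ, rankGE X δ μ ↔ rankGE (Set.Iio δ) δ μ)
    (hge : rankGE (Set.Iio δ) δ ξ₁)
    (η : Ordinal) (hη : η < δ) (S : Finset ℕ)
    (havoid : ∀ γ, ∀ h : γ < δ, η ≤ γ → g ⟨γ, h⟩ ∉ S)
    (ξ₀ : Ordinal) (hξ₀ : ξ₀ < ξ₁) :
    ∃ γ, ∃ h : γ < δ, η ≤ γ ∧ g ⟨γ, h⟩ ≠ k ∧ rankGE (Set.Iio γ) γ ξ₀ :=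
  stmt10_general δ hδ g hg k X hX ξ₁ hrk hge η hη ξ₀ hξ₀
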